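/- Let W be a weight on the σ-algebra generated by the dyadic subcubes of [0,1)^d (i.e. Σ_i W(S_i) ≤ W(∪_i S_i) for disjoint families, W(S) → 0 as |S| → 0, and W([0,1)^d) = 1), and let N ∈ ℕ. Then the set G_N := {Q dyadic : W(Q) ≥ 1/N} is finite, and there exists a partition B of G_N∖{[0,1)^d} into paths in the dyadic tree (chains T_B = Q_1 ⊂ Q_2 ⊂ … ⊂ Q_n = H_B in which each Q_i is a son of Q_{i+1}) such that W(H_B∖T_B) < 1/N for every B ∈ B, and card B ≤ 3N + 1. -/

import Mathlib

open MeasureTheory ENNReal Filter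

noncomputable section

/-- A (half-open, axis-parallel) cube `x + [0,l)^d` in `ℝ^d`. -/
def IsCube (d : ℕ) (Q : Set (Fin d → ℝ)) : Prop :=
  ∃ (x : Fin d → ℝ) (l : ℝ), 0 < l ∧
    Q = Set.univ.pi fun i => Set.Ico (x i) (x i + l)

/-- The half-open unit cube `[0,1)^d`. -/
def unitCube (d : ℕ) : Set (Fin d → ℝ) :=
  Set.univ.pi fun _ => Set.Ico (0 : ℝ) 1

/-- Dyadic subcubes `2^{-j}([0,1)^d + α)` of the unit cube `[0,1)^d`. -/
def IsDyadicCube (d : ℕ) (Q : Set (Fin d → ℝ)) : Prop :=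
  ∃ (j : ℕ) (α : Fin d → ℕ), (∀ i, α i < 2 ^ j) ∧
    Q = Set.univ.pi fun i => Set.Ico ((α i : ℝ) / 2 ^ j) (((α i : ℝ) + 1) / 2 ^ j)

/-- `E_k(f;S;L_q)`: best `L_q(S)`-approximation of `f` by polynomials in `d`
variables of total degree at most `k-1`. -/
def Ek (d k : ℕ) (q : ℝ≥0∞) (f : (Fin d → ℝ) → ℝ) (S : Set (Fin d → ℝ)) : ℝ≥0∞ :=
  ⨅ (m : MvPolynomial (Fin d) ℝ) (_ : m.totalDegree ≤ k - 1),
    eLpNorm (fun x => f x - MvPolynomial.eval x m) q (volume.restrict S)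

/-- The `(k,p)`-variation of `f` on `S`, computed in `L_q`: the supremum over all
finite disjoint families of cubes contained in `S` of `(Σ_Q E_k(f;Q;L_q)^p)^{1/p}`. -/
def varpk (d k : ℕ) (p : ℝ) (q : ℝ≥0∞) (f : (Fin d → ℝ) → ℝ) (S : Set (Fin d → ℝ)) : ℝ≥0∞ :=
  ⨆ (Δ : Finset (Set (Fin d → ℝ)))
    (_ : ∀ Q ∈ Δ, IsCube d Q ∧ Q ⊆ S)
    (_ : (Δ : Set (Set (Fin d → ℝ))).PairwiseDisjoint id),
    (∑ Q ∈ Δ, Ek d k q f Q ^ p) ^ (1 / p)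

/-- The piecewise polynomial `Σ_{Q ∈ Δ} P_Q · 1_Q`. -/
def piecewisePoly (d : ℕ) (Δ : Finset (Set (Fin d → ℝ)))
    (P : Set (Fin d → ℝ) → MvPolynomial (Fin d) ℝ) : (Fin d → ℝ) → ℝ :=
  fun x => ∑ Q ∈ Δ, Q.indicator (fun y => MvPolynomial.eval y (P Q)) x

end

noncomputable section

/-- The σ-algebra on `ℝ^d` generated by the dyadic subcubes of `[0,1)^d`. -/
def dyadicSigma (d : ℕ) : MeasurableSpace (Fin d → ℝ) :=
  MeasurableSpace.generateFrom {Q | IsDyadicCube d Q}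

/-- A weight: a `[0,∞]`-valued set function on the σ-algebra generated by the
dyadic subcubes of `[0,1)^d` which is superadditive over countable disjoint
unions, absolutely continuous (`W(S) → 0` as `|S| → 0`), and normalized by
`W([0,1)^d) = 1`. -/
def IsWeight (d : ℕ) (W : Set (Fin d → ℝ) → ℝ≥0∞) : Prop :=
  (∀ S : ℕ → Set (Fin d → ℝ),
      (∀ i, MeasurableSet[dyadicSigma d] (S i)) →
      Pairwise (Function.onFun Disjoint S) →
      ∑' i, W (S i) ≤ W (⋃ i, S i)) ∧
  (∀ ε : ℝ≥0∞, 0 < ε → ∃ δ : ℝ≥0∞, 0 < δ ∧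
      ∀ S : Set (Fin d → ℝ), MeasurableSet[dyadicSigma d] S →
        MeasureTheory.volume S < δ → W S < ε) ∧
  W (unitCube d) = 1

/-- The set `G_N` of "bad" dyadic cubes: those with `W(Q) ≥ 1/N`. -/
def GN (d N : ℕ) (W : Set (Fin d → ℝ) → ℝ≥0∞) : Set (Set (Fin d → ℝ)) :=
  {Q | IsDyadicCube d Q ∧ ((N : ℝ≥0∞))⁻¹ ≤ W Q}

/-- The complement `G_N^c` of `G_N` within the dyadic cubes. -/
def GNc (d N : ℕ) (W : Set (Fin d → ℝ) → ℝ≥0∞) : Set (Set (Fin d → ℝ)) :=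
  {Q | IsDyadicCube d Q ∧ W Q < ((N : ℝ≥0∞))⁻¹}

/-- The boundary `∂G_N`: the maximal (for inclusion) cubes of `G_N^c`. -/
def bdryGN (d N : ℕ) (W : Set (Fin d → ℝ) → ℝ≥0∞) : Set (Set (Fin d → ℝ)) :=
  {Q ∈ GNc d N W | ∀ Q' ∈ GNc d N W, Q ⊆ Q' → Q = Q'}

end

noncomputable section

/-- The path in the dyadic tree joining the dyadic cube `T` (tail) to the dyadic
cube `H` (head): the set of all dyadic cubes `Q` with `T ⊆ Q ⊆ H`. -/
def dyadicPath (d : ℕ) (T H : Set (Fin d → ℝ)) : Set (Set (Fin d → ℝ)) :=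
  {Q | IsDyadicCube d Q ∧ T ⊆ Q ∧ Q ⊆ H}

end

/-!
Absolute continuity of `W` bounds the volume, hence the level, of the cubes of `G_N`, so `G_N` is
finite. It is closed upwards and two dyadic cubes are nested or disjoint, so `G_N` is a finite tree
rooted at `[0,1)^d`, whose subtrees are partitioned into paths from the leaves up. At a cube `R`
with children `c`, each child comes with a partition having a top path `T_c ⊆ … ⊆ c`. If `R` has
a single child and `W(R \ T_c) < 1/N`, that top path is extended to `R`; otherwise `R` starts a
new path. The invariant `#paths + 1 ≤ 2N W(T)` (`T` the tail of the top path) is kept by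
superadditivity of `W` over the disjoint sets `T_c` and `R \ ⋃ T_c`: a new path at `R` is paid for
either by a second child or by a remainder of weight `≥ 1/N`. At the root this gives at most `2N`
paths.
-/

section DyadicGeometry

variable {d : ℕ}

def dyadicCube (d j : ℕ) (α : Fin d → ℕ) : Set (Fin d → ℝ) :=
  Set.univ.pi fun i => Set.Ico ((α i : ℝ) / 2 ^ j) (((α i : ℝ) + 1) / 2 ^ j)

theorem mem_Ico_div_two_pow_iff {x : ℝ} {j a : ℕ} :
    x ∈ Set.Ico ((a : ℝ) / 2 ^ j) (((a : ℝ) + 1) / 2 ^ j) ↔ 0 ≤ x ∧ ⌊x * 2 ^ j⌋₊ = a := by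
  have h2j : (0 : ℝ) < 2 ^ j := by positivity
  rw [Set.mem_Ico, div_le_iff₀ h2j, lt_div_iff₀ h2j]
  constructor
  · rintro ⟨hlo, hhi⟩
    have hx : 0 ≤ x * 2 ^ j := le_trans (Nat.cast_nonneg a) hlo
    exact ⟨nonneg_of_mul_nonneg_left hx h2j, (Nat.floor_eq_iff hx).2 ⟨hlo, hhi⟩⟩
  · rintro ⟨hx, hfloor⟩
    exact (Nat.floor_eq_iff (by positivity)).1 hfloor

theorem floor_mul_two_pow_of_le (x : ℝ) {j k : ℕ} (hjk : j ≤ k) :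
    ⌊x * 2 ^ j⌋₊ = ⌊x * 2 ^ k⌋₊ / 2 ^ (k - j) := by
  rw [← Nat.floor_div_natCast, Nat.cast_pow, Nat.cast_ofNat, mul_div_assoc]
  congr 2
  rw [_root_.eq_div_iff (by positivity), ← pow_add, Nat.add_sub_cancel' hjk]

theorem mem_dyadicCube {j : ℕ} {α : Fin d → ℕ} {x : Fin d → ℝ} :
    x ∈ dyadicCube d j α ↔ ∀ i, 0 ≤ x i ∧ ⌊x i * 2 ^ j⌋₊ = α i := by
  simp only [dyadicCube, Set.mem_univ_pi, mem_Ico_div_two_pow_iff]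

theorem unitCube_eq_dyadicCube : unitCube d = dyadicCube d 0 0 := by
  simp [unitCube, dyadicCube]

theorem dyadicCube_subset_of_le {j k : ℕ} {α β : Fin d → ℕ} (hjk : j ≤ k)
    {x : Fin d → ℝ} (hxα : x ∈ dyadicCube d j α) (hxβ : x ∈ dyadicCube d k β) :
    dyadicCube d k β ⊆ dyadicCube d j α := by
  intro y hy
  rw [mem_dyadicCube] at hxα hxβ hy ⊢
  intro i
  refine ⟨(hy i).1, ?_⟩
  rw [floor_mul_two_pow_of_le _ hjk, (hy i).2, ← (hxβ i).2, ← floor_mul_two_pow_of_le _ hjk,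
    (hxα i).2]

theorem IsDyadicCube.nonempty {Q : Set (Fin d → ℝ)} (hQ : IsDyadicCube d Q) : Q.Nonempty := by
  obtain ⟨j, α, -, rfl⟩ := hQ
  refine ⟨fun i => (α i : ℝ) / 2 ^ j, mem_dyadicCube.2 fun i => ⟨by positivity, ?_⟩⟩
  rw [div_mul_cancel₀ _ (by positivity), Nat.floor_natCast]

theorem IsDyadicCube.subset_unitCube {Q : Set (Fin d → ℝ)} (hQ : IsDyadicCube d Q) :
    Q ⊆ unitCube d := by
  obtain ⟨j, α, hα, rfl⟩ := hQ
  intro y hy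
  rw [unitCube_eq_dyadicCube, mem_dyadicCube]
  intro i
  have hy := mem_dyadicCube.1 hy
  refine ⟨(hy i).1, ?_⟩
  rw [floor_mul_two_pow_of_le _ (Nat.zero_le j), (hy i).2, Nat.div_eq_of_lt (by simpa using hα i)]
  rfl

theorem isDyadicCube_unitCube : IsDyadicCube d (unitCube d) :=
  ⟨0, 0, fun _ => Nat.one_pos, unitCube_eq_dyadicCube⟩

theorem IsDyadicCube.subset_or_subset {P Q : Set (Fin d → ℝ)} (hP : IsDyadicCube d P)
    (hQ : IsDyadicCube d Q) (hPQ : (P ∩ Q).Nonempty) : P ⊆ Q ∨ Q ⊆ P := by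
  obtain ⟨j, α, -, rfl⟩ := hP
  obtain ⟨k, β, -, rfl⟩ := hQ
  obtain ⟨x, hxP, hxQ⟩ := hPQ
  rcases le_total j k with hjk | hkj
  · exact Or.inr (dyadicCube_subset_of_le hjk hxP hxQ)
  · exact Or.inl (dyadicCube_subset_of_le hkj hxQ hxP)

theorem volume_dyadicCube (j : ℕ) (α : Fin d → ℕ) :
    volume (dyadicCube d j α) = (2⁻¹ ^ j) ^ d := by
  have hside : ∀ i, ((α i : ℝ) + 1) / 2 ^ j - (α i : ℝ) / 2 ^ j = 2⁻¹ ^ j := by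
    intro i
    rw [← sub_div, add_sub_cancel_left, one_div, inv_pow]
  simp [dyadicCube, volume_pi_pi, Real.volume_Ico, hside, ENNReal.ofReal_pow,
    ENNReal.ofReal_inv_of_pos, ENNReal.inv_pow]

theorem IsDyadicCube.measurableSet {Q : Set (Fin d → ℝ)} (hQ : IsDyadicCube d Q) :
    MeasurableSet[dyadicSigma d] Q :=
  MeasurableSpace.measurableSet_generateFrom hQ

theorem finite_setOf_isDyadicCube_le_volume (hd : 1 ≤ d) {δ : ℝ≥0∞} (hδ : δ ≠ 0) :
    {Q | IsDyadicCube d Q ∧ δ ≤ volume Q}.Finite := by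
  obtain ⟨j₀, hj₀⟩ := ENNReal.exists_inv_two_pow_lt hδ
  refine ((Finset.range (j₀ + 1)).finite_toSet.biUnion fun j _ =>
    (Set.Finite.pi fun _ => Set.finite_Iio (2 ^ j)).image (dyadicCube d j)).subset ?_
  rintro Q ⟨⟨j, α, hα, rfl⟩, hvol⟩
  have hj : j ≤ j₀ := by
    by_contra! hj
    refine hvol.not_gt (lt_of_le_of_lt ?_ hj₀)
    calc volume (dyadicCube d j α) = 2⁻¹ ^ (j * d) := by rw [volume_dyadicCube, pow_mul]
      _ ≤ 2⁻¹ ^ j₀ :=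
        pow_le_pow_of_le_one zero_le (ENNReal.inv_le_one.2 one_le_two) (by nlinarith)
  exact Set.mem_biUnion (Finset.mem_coe.2 (Finset.mem_range.2 (by omega)))
    ⟨α, fun i _ => hα i, rfl⟩

end DyadicGeometry

namespace IsWeight

variable {d : ℕ} {W : Set (Fin d → ℝ) → ℝ≥0∞}

theorem apply_empty (hW : IsWeight d W) : W ∅ = 0 := by
  by_contra h
  obtain ⟨δ, hδ, hsmall⟩ := hW.2.1 (W ∅) (pos_iff_ne_zero.2 h)
  exact (hsmall ∅ (dyadicSigma d).measurableSet_empty (by simpa using hδ)).false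

theorem add_le_union (hW : IsWeight d W) {A B : Set (Fin d → ℝ)}
    (hA : MeasurableSet[dyadicSigma d] A) (hB : MeasurableSet[dyadicSigma d] B)
    (hAB : Disjoint A B) : W A + W B ≤ W (A ∪ B) := by
  set S : ℕ → Set (Fin d → ℝ) := fun n => if n = 0 then A else if n = 1 then B else ∅
  have hS : ∀ n, MeasurableSet[dyadicSigma d] (S n) := by
    intro n
    dsimp only [S]
    split_ifs <;> first | assumption | exact (dyadicSigma d).measurableSet_empty
  have hdisj : Pairwise (Function.onFun Disjoint S) := by
    intro m n hmn
    dsimp only [Function.onFun, S]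
    split_ifs <;> first | omega | exact hAB | exact hAB.symm | simp
  have hU : ⋃ n, S n = A ∪ B := by
    ext x
    simp only [Set.mem_iUnion, Set.mem_union, S]
    constructor
    · rintro ⟨n, hn⟩; split_ifs at hn <;> simp_all
    · rintro (hx | hx)
      exacts [⟨0, by simpa using hx⟩, ⟨1, by simpa using hx⟩]
  calc W A + W B = ∑ n ∈ Finset.range 2, W (S n) := by simp [Finset.sum_range_succ, S]
    _ ≤ ∑' n, W (S n) := ENNReal.sum_le_tsum _
    _ ≤ W (⋃ n, S n) := hW.1 S hS hdisj
    _ = W (A ∪ B) := by rw [hU]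

theorem mono (hW : IsWeight d W) {A B : Set (Fin d → ℝ)} (hA : MeasurableSet[dyadicSigma d] A)
    (hB : MeasurableSet[dyadicSigma d] B) (hAB : A ⊆ B) : W A ≤ W B :=
  calc W A ≤ W A + W (B \ A) := le_self_add
    _ ≤ W (A ∪ B \ A) := hW.add_le_union hA (hB.diff hA) Set.disjoint_sdiff_right
    _ = W B := by rw [Set.union_sdiff_cancel hAB]

theorem sum_le_biUnion (hW : IsWeight d W) {ι : Type*} (s : Finset ι) {f : ι → Set (Fin d → ℝ)}
    (hf : ∀ i ∈ s, MeasurableSet[dyadicSigma d] (f i)) (hdisj : (s : Set ι).PairwiseDisjoint f) :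
    ∑ i ∈ s, W (f i) ≤ W (⋃ i ∈ s, f i) := by
  classical
  induction s using Finset.induction_on with
  | empty => simp
  | insert a s ha ih =>
    rw [Finset.sum_insert ha, Finset.set_biUnion_insert]
    have hs : (s : Set ι).PairwiseDisjoint f := hdisj.subset (by simp)
    calc W (f a) + ∑ i ∈ s, W (f i) ≤ W (f a) + W (⋃ i ∈ s, f i) := by
          gcongr; exact ih (fun i hi => hf i (Finset.mem_insert_of_mem hi)) hs
      _ ≤ W (f a ∪ ⋃ i ∈ s, f i) := by
        refine hW.add_le_union (hf a (Finset.mem_insert_self a s))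
          (@Finset.measurableSet_biUnion _ _ (dyadicSigma d) _ s fun i hi =>
            hf i (Finset.mem_insert_of_mem hi)) ?_
        refine Set.disjoint_iUnion₂_right.2 fun i hi => hdisj (by simp) (by simp [hi]) ?_
        rintro rfl
        exact ha hi

end IsWeight

section Paths

variable {d : ℕ} {W : Set (Fin d → ℝ) → ℝ≥0∞} {ε : ℝ≥0∞}

theorem dyadicPath_self {R : Set (Fin d → ℝ)} (hR : IsDyadicCube d R) :
    dyadicPath d R R = {R} := by
  ext Q
  exact ⟨fun hQ => le_antisymm hQ.2.2 hQ.2.1, by rintro rfl; exact ⟨hR, subset_rfl, subset_rfl⟩⟩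

def IsLightPath (d : ℕ) (W : Set (Fin d → ℝ) → ℝ≥0∞) (ε : ℝ≥0∞) (T H : Set (Fin d → ℝ)) :
    Prop :=
  IsDyadicCube d T ∧ IsDyadicCube d H ∧ T ⊆ H ∧ W (H \ T) < ε

structure IsPathPartition (d : ℕ) (W : Set (Fin d → ℝ) → ℝ≥0∞) (ε : ℝ≥0∞)
    (ℬ : Finset (Set (Fin d → ℝ) × Set (Fin d → ℝ))) (𝒮 : Set (Set (Fin d → ℝ))) : Prop where
  isLightPath : ∀ p ∈ ℬ, IsLightPath d W ε p.1 p.2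
  pairwiseDisjoint : (ℬ : Set (Set (Fin d → ℝ) × Set (Fin d → ℝ))).PairwiseDisjoint
    fun p => dyadicPath d p.1 p.2
  biUnion_eq : ⋃ p ∈ ℬ, dyadicPath d p.1 p.2 = 𝒮

namespace IsPathPartition

variable {ℬ : Finset (Set (Fin d → ℝ) × Set (Fin d → ℝ))} {𝒮 : Set (Set (Fin d → ℝ))}

theorem dyadicPath_subset (h : IsPathPartition d W ε ℬ 𝒮) {p : Set (Fin d → ℝ) × Set (Fin d → ℝ)}
    (hp : p ∈ ℬ) : dyadicPath d p.1 p.2 ⊆ 𝒮 :=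
  h.biUnion_eq ▸ Set.subset_biUnion_of_mem (u := fun p => dyadicPath d p.1 p.2) hp

theorem insert (h : IsPathPartition d W ε ℬ 𝒮) {T H : Set (Fin d → ℝ)}
    (hTH : IsLightPath d W ε T H) (hdisj : Disjoint (dyadicPath d T H) 𝒮) :
    IsPathPartition d W ε (insert (T, H) ℬ) (dyadicPath d T H ∪ 𝒮) where
  isLightPath p hp := by
    rcases Finset.mem_insert.1 hp with rfl | hp
    exacts [hTH, h.isLightPath p hp]
  pairwiseDisjoint := by
    rw [Finset.coe_insert]
    exact h.pairwiseDisjoint.insert fun q hq _ => hdisj.mono_right (h.dyadicPath_subset hq)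
  biUnion_eq := by rw [Finset.set_biUnion_insert, h.biUnion_eq]

theorem biUnion {ι : Type*} [DecidableEq (Set (Fin d → ℝ) × Set (Fin d → ℝ))] {s : Finset ι}
    {ℬ : ι → Finset (Set (Fin d → ℝ) × Set (Fin d → ℝ))} {𝒮 : ι → Set (Set (Fin d → ℝ))}
    (h : ∀ i ∈ s, IsPathPartition d W ε (ℬ i) (𝒮 i)) (hdisj : (s : Set ι).PairwiseDisjoint 𝒮) :
    IsPathPartition d W ε (s.biUnion ℬ) (⋃ i ∈ s, 𝒮 i) where
  isLightPath p hp := by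
    obtain ⟨i, hi, hp⟩ := Finset.mem_biUnion.1 hp
    exact (h i hi).isLightPath p hp
  pairwiseDisjoint := by
    intro p hp q hq hpq
    obtain ⟨i, hi, hp⟩ := Finset.mem_biUnion.1 hp
    obtain ⟨j, hj, hq⟩ := Finset.mem_biUnion.1 hq
    obtain rfl | hij := eq_or_ne i j
    · exact (h i hi).pairwiseDisjoint hp hq hpq
    · exact (hdisj hi hj hij).mono ((h i hi).dyadicPath_subset hp) ((h j hj).dyadicPath_subset hq)
  biUnion_eq := by
    rw [Finset.set_biUnion_biUnion]
    exact Set.iUnion₂_congr fun i hi => (h i hi).biUnion_eq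

theorem exists_fin (h : IsPathPartition d W ε ℬ 𝒮) :
    ∃ T H : Fin ℬ.card → Set (Fin d → ℝ),
      (∀ i, IsDyadicCube d (T i)) ∧ (∀ i, IsDyadicCube d (H i)) ∧ (∀ i, T i ⊆ H i) ∧
      (Set.univ : Set (Fin ℬ.card)).PairwiseDisjoint (fun i => dyadicPath d (T i) (H i)) ∧
      (⋃ i, dyadicPath d (T i) (H i)) = 𝒮 ∧ ∀ i, W (H i \ T i) < ε := by
  set e := ℬ.equivFin.symm
  have he : ∀ i, IsLightPath d W ε (e i).1.1 (e i).1.2 := fun i => h.isLightPath _ (e i).2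
  refine ⟨fun i => (e i).1.1, fun i => (e i).1.2, fun i => (he i).1, fun i => (he i).2.1,
    fun i => (he i).2.2.1, fun i _ j _ hij => ?_, ?_, fun i => (he i).2.2.2⟩
  · exact h.pairwiseDisjoint (e i).2 (e j).2 fun heq => hij (e.injective (Subtype.ext heq))
  · rw [← h.biUnion_eq, e.surjective.iUnion_comp (fun p => dyadicPath d p.1.1 p.1.2),
      Set.iUnion_subtype]

end IsPathPartition

end Paths

section Tree

variable {d N : ℕ} {W : Set (Fin d → ℝ) → ℝ≥0∞}

def GNBelow (d N : ℕ) (W : Set (Fin d → ℝ) → ℝ≥0∞) (R : Set (Fin d → ℝ)) :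
    Set (Set (Fin d → ℝ)) :=
  {Q ∈ GN d N W | Q ⊆ R}

theorem GN_finite (hd : 1 ≤ d) (hW : IsWeight d W) : (GN d N W).Finite := by
  obtain ⟨δ, hδ, hsmall⟩ := hW.2.1 (N : ℝ≥0∞)⁻¹ (ENNReal.inv_pos.2 (ENNReal.natCast_ne_top N))
  refine (finite_setOf_isDyadicCube_le_volume hd hδ.ne').subset fun Q hQ => ⟨hQ.1, ?_⟩
  by_contra! hvol
  exact (hsmall Q hQ.1.measurableSet hvol).not_ge hQ.2

theorem mem_GN_of_subset (hW : IsWeight d W) {Q Q' : Set (Fin d → ℝ)} (hQ : Q ∈ GN d N W)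
    (hQ' : IsDyadicCube d Q') (hQQ' : Q ⊆ Q') : Q' ∈ GN d N W :=
  ⟨hQ', hQ.2.trans (hW.mono hQ.1.measurableSet hQ'.measurableSet hQQ')⟩

theorem dyadicPath_subset_GNBelow (hW : IsWeight d W) {T H : Set (Fin d → ℝ)}
    (hT : T ∈ GN d N W) : dyadicPath d T H ⊆ GNBelow d N W H :=
  fun _ hQ => ⟨mem_GN_of_subset hW hT hQ.1 hQ.2.1, hQ.2.2⟩

theorem GNBelow_unitCube : GNBelow d N W (unitCube d) = GN d N W :=
  Set.sep_eq_self_iff_mem_true.2 fun _ hQ => hQ.1.subset_unitCube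

/-- `𝒞` is the set of children of `R` in the tree `G_N`: its maximal cubes strictly inside `R`. -/
structure IsChildFamily (d N : ℕ) (W : Set (Fin d → ℝ) → ℝ≥0∞) (R : Set (Fin d → ℝ))
    (𝒞 : Finset (Set (Fin d → ℝ))) : Prop where
  mem_GN : ∀ c ∈ 𝒞, c ∈ GN d N W
  ssubset : ∀ c ∈ 𝒞, c ⊂ R
  pairwiseDisjoint : (𝒞 : Set (Set (Fin d → ℝ))).PairwiseDisjoint id
  GNBelow_diff_eq : GNBelow d N W R \ {R} = ⋃ c ∈ 𝒞, GNBelow d N W c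

theorem exists_isChildFamily (hfin : (GN d N W).Finite) (R : Set (Fin d → ℝ)) :
    ∃ 𝒞, IsChildFamily d N W R 𝒞 := by
  set 𝒮 := GNBelow d N W R \ {R}
  have h𝒮 : 𝒮.Finite := hfin.subset fun _ hQ => hQ.1.1
  have hmax : {c | Maximal (· ∈ 𝒮) c}.Finite := h𝒮.subset fun _ hc => hc.prop
  have hmem : ∀ c ∈ hmax.toFinset, c ∈ 𝒮 := fun c hc => (hmax.mem_toFinset.1 hc).prop
  refine ⟨hmax.toFinset, fun c hc => (hmem c hc).1.1,
    fun c hc => ssubset_of_subset_of_ne (hmem c hc).1.2 (hmem c hc).2, ?_, ?_⟩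
  · intro c hc c' hc' hne
    rw [Finset.mem_coe, hmax.mem_toFinset] at hc hc'
    by_contra hcc
    rcases hc.prop.1.1.1.subset_or_subset hc'.prop.1.1.1 (Set.not_disjoint_iff_nonempty_inter.1 hcc)
      with h | h
    exacts [hne (hc.eq_of_le hc'.prop h), hne (hc'.eq_of_le hc.prop h).symm]
  · ext Q
    simp only [Set.mem_iUnion, Set.Finite.mem_toFinset, exists_prop]
    constructor
    · intro hQ
      obtain ⟨c, hQc, hc⟩ := h𝒮.exists_le_maximal hQ
      exact ⟨c, hc, hQ.1.1, hQc⟩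
    · rintro ⟨c, hc, hQ, hQc⟩
      have hcR := hc.prop
      refine ⟨⟨hQ, hQc.trans hcR.1.2⟩, fun hQR => hcR.2 ?_⟩
      rw [Set.mem_singleton_iff] at hQR ⊢
      exact hcR.1.2.antisymm (hQR ▸ hQc)

/-- A partition of `{Q ∈ G_N | Q ⊆ R}` into the top path from `T` to `R` and the paths of `ℬ`. -/
structure IsRootedPathPartition (d N : ℕ) (W : Set (Fin d → ℝ) → ℝ≥0∞) (R T : Set (Fin d → ℝ))
    (ℬ : Finset (Set (Fin d → ℝ) × Set (Fin d → ℝ))) : Prop where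
  tail_mem : T ∈ GN d N W
  tail_subset : T ⊆ R
  weight_diff_lt : W (R \ T) < (N : ℝ≥0∞)⁻¹
  isPathPartition : IsPathPartition d W (N : ℝ≥0∞)⁻¹ ℬ (GNBelow d N W R \ dyadicPath d T R)
  card_add_two_le : (ℬ.card + 2 : ℝ≥0∞) ≤ 2 * N * W T

namespace IsRootedPathPartition

variable {R T : Set (Fin d → ℝ)} {ℬ : Finset (Set (Fin d → ℝ) × Set (Fin d → ℝ))}

theorem isPathPartition_insert (hW : IsWeight d W) (hR : IsDyadicCube d R)
    (h : IsRootedPathPartition d N W R T ℬ) :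
    IsPathPartition d W (N : ℝ≥0∞)⁻¹ (insert (T, R) ℬ) (GNBelow d N W R) := by
  rw [← Set.union_sdiff_cancel (dyadicPath_subset_GNBelow hW h.tail_mem)]
  exact h.isPathPartition.insert ⟨h.tail_mem.1, hR, h.tail_subset, h.weight_diff_lt⟩
    Set.disjoint_sdiff_right

theorem of_root (hW : IsWeight d W) (hR : R ∈ GN d N W)
    (h : IsPathPartition d W (N : ℝ≥0∞)⁻¹ ℬ (GNBelow d N W R \ {R}))
    (hcard : (ℬ.card + 2 : ℝ≥0∞) ≤ 2 * N * W R) : IsRootedPathPartition d N W R R ℬ where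
  tail_mem := hR
  tail_subset := subset_rfl
  weight_diff_lt := by
    rw [Set.sdiff_self, hW.apply_empty]
    exact ENNReal.inv_pos.2 (ENNReal.natCast_ne_top N)
  isPathPartition := by rwa [dyadicPath_self hR.1]
  card_add_two_le := hcard

theorem extend {c : Set (Fin d → ℝ)} (hc : IsChildFamily d N W R {c})
    (h : IsRootedPathPartition d N W c T ℬ) (hRT : W (R \ T) < (N : ℝ≥0∞)⁻¹) :
    IsRootedPathPartition d N W R T ℬ where
  tail_mem := h.tail_mem
  tail_subset := h.tail_subset.trans (hc.ssubset c (Finset.mem_singleton_self c)).subset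
  weight_diff_lt := hRT
  isPathPartition := by
    have hcR := (hc.ssubset c (Finset.mem_singleton_self c)).subset
    have hbelow : GNBelow d N W R \ {R} = GNBelow d N W c := by
      simpa using hc.GNBelow_diff_eq
    convert h.isPathPartition using 1
    ext Q
    constructor
    · rintro ⟨hQR, hQT⟩
      have hQc : Q ∈ GNBelow d N W c := by
        refine hbelow ▸ ⟨hQR, fun hQ => hQT ?_⟩
        obtain rfl := Set.mem_singleton_iff.1 hQ
        exact ⟨hQR.1.1, h.tail_subset.trans hcR, subset_rfl⟩
      exact ⟨hQc, fun hp => hQT ⟨hp.1, hp.2.1, hp.2.2.trans hcR⟩⟩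
    · rintro ⟨hQc, hQT⟩
      exact ⟨⟨hQc.1, hQc.2.trans hcR⟩, fun hp => hQT ⟨hp.1, hp.2.1, hQc.2⟩⟩
  card_add_two_le := h.card_add_two_le

end IsRootedPathPartition

namespace IsChildFamily

variable {R : Set (Fin d → ℝ)}
  {𝒞 : Finset (Set (Fin d → ℝ))} {τ : Set (Fin d → ℝ) → Set (Fin d → ℝ)}
  {ℬ : Set (Fin d → ℝ) → Finset (Set (Fin d → ℝ) × Set (Fin d → ℝ))}

theorem isPathPartition (hW : IsWeight d W) (h𝒞 : IsChildFamily d N W R 𝒞)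
    (hτℬ : ∀ c ∈ 𝒞, IsRootedPathPartition d N W c (τ c) (ℬ c)) :
    IsPathPartition d W (N : ℝ≥0∞)⁻¹ (𝒞.biUnion fun c => insert (τ c, c) (ℬ c))
      (GNBelow d N W R \ {R}) := by
  rw [h𝒞.GNBelow_diff_eq]
  refine IsPathPartition.biUnion
    (fun c hc => (hτℬ c hc).isPathPartition_insert hW (h𝒞.mem_GN c hc).1) ?_
  refine fun c hc c' hc' hne => Set.disjoint_left.2 fun Q hQ hQ' => ?_
  obtain ⟨x, hx⟩ := hQ.1.1.nonempty
  exact Set.disjoint_left.1 (h𝒞.pairwiseDisjoint hc hc' hne) (hQ.2 hx) (hQ'.2 hx)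

theorem card_add_le (hW : IsWeight d W) (hR : IsDyadicCube d R) (h𝒞 : IsChildFamily d N W R 𝒞)
    (hτℬ : ∀ c ∈ 𝒞, IsRootedPathPartition d N W c (τ c) (ℬ c)) :
    ((𝒞.biUnion fun c => insert (τ c, c) (ℬ c)).card + 𝒞.card : ℝ≥0∞) +
      2 * N * W (R \ ⋃ c ∈ 𝒞, τ c) ≤ 2 * N * W R := by
  have hτ : ∀ c ∈ 𝒞, MeasurableSet[dyadicSigma d] (τ c) :=
    fun c hc => (hτℬ c hc).tail_mem.1.measurableSet
  have hU : MeasurableSet[dyadicSigma d] (⋃ c ∈ 𝒞, τ c) :=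
    @Finset.measurableSet_biUnion _ _ (dyadicSigma d) _ 𝒞 hτ
  have hUR : (⋃ c ∈ 𝒞, τ c) ⊆ R := Set.iUnion₂_subset fun c hc =>
    (hτℬ c hc).tail_subset.trans (h𝒞.ssubset c hc).subset
  have hcard : (𝒞.biUnion fun c => insert (τ c, c) (ℬ c)).card + 𝒞.card ≤
      ∑ c ∈ 𝒞, ((ℬ c).card + 2) := by
    calc _ ≤ ∑ c ∈ 𝒞, (insert (τ c, c) (ℬ c)).card + ∑ c ∈ 𝒞, 1 := by
          rw [← Finset.card_eq_sum_ones]; exact add_le_add_left Finset.card_biUnion_le _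
      _ ≤ ∑ c ∈ 𝒞, ((ℬ c).card + 1) + ∑ c ∈ 𝒞, 1 := by
          gcongr with c; exact Finset.card_insert_le _ _
      _ = _ := by rw [← Finset.sum_add_distrib]
  have hsuper : ∑ c ∈ 𝒞, W (τ c) + W (R \ ⋃ c ∈ 𝒞, τ c) ≤ W R := by
    calc _ ≤ W (⋃ c ∈ 𝒞, τ c) + W (R \ ⋃ c ∈ 𝒞, τ c) := by
          gcongr
          exact hW.sum_le_biUnion 𝒞 hτ fun c hc c' hc' hne => (h𝒞.pairwiseDisjoint hc hc' hne).mono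
            (hτℬ c hc).tail_subset (hτℬ c' hc').tail_subset
      _ ≤ W ((⋃ c ∈ 𝒞, τ c) ∪ R \ ⋃ c ∈ 𝒞, τ c) :=
          hW.add_le_union hU (hR.measurableSet.diff hU) Set.disjoint_sdiff_right
      _ = W R := by rw [Set.union_sdiff_cancel hUR]
  calc _ ≤ ∑ c ∈ 𝒞, ((ℬ c).card + 2 : ℝ≥0∞) + 2 * N * W (R \ ⋃ c ∈ 𝒞, τ c) := by
        gcongr; exact_mod_cast hcard
    _ ≤ ∑ c ∈ 𝒞, 2 * N * W (τ c) + 2 * N * W (R \ ⋃ c ∈ 𝒞, τ c) := by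
        gcongr with c hc; exact (hτℬ c hc).card_add_two_le
    _ = 2 * N * (∑ c ∈ 𝒞, W (τ c) + W (R \ ⋃ c ∈ 𝒞, τ c)) := by rw [mul_add, Finset.mul_sum]
    _ ≤ 2 * N * W R := by gcongr

theorem exists_isRootedPathPartition (hN : 1 ≤ N) (hW : IsWeight d W) (hR : R ∈ GN d N W)
    (h𝒞 : IsChildFamily d N W R 𝒞)
    (hτℬ : ∀ c ∈ 𝒞, IsRootedPathPartition d N W c (τ c) (ℬ c)) :
    ∃ T ℬ', IsRootedPathPartition d N W R T ℬ' := by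
  set 𝒬 := 𝒞.biUnion fun c => insert (τ c, c) (ℬ c)
  have hcount := h𝒞.card_add_le hW hR.1 hτℬ
  by_cases hroot : 2 ≤ 𝒞.card ∨ (N : ℝ≥0∞)⁻¹ ≤ W (R \ ⋃ c ∈ 𝒞, τ c)
  · refine ⟨R, 𝒬, .of_root hW hR (h𝒞.isPathPartition hW hτℬ) (le_trans ?_ hcount)⟩
    rcases hroot with h2 | hheavy
    · calc (𝒬.card + 2 : ℝ≥0∞) ≤ 𝒬.card + 𝒞.card := by gcongr; exact_mod_cast h2
        _ ≤ _ := le_self_add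
    · have hN0 : (N : ℝ≥0∞) ≠ 0 := by exact_mod_cast (Nat.one_le_iff_ne_zero.1 hN)
      calc (𝒬.card + 2 : ℝ≥0∞) = 𝒬.card + 2 * N * (N : ℝ≥0∞)⁻¹ := by
            rw [mul_assoc, ENNReal.mul_inv_cancel hN0 (ENNReal.natCast_ne_top N), mul_one]
        _ ≤ _ := add_le_add le_self_add (by gcongr)
  · push Not at hroot
    obtain ⟨hcard, hlight⟩ := hroot
    obtain ⟨c, rfl⟩ : ∃ c, 𝒞 = {c} := by
      refine Finset.card_eq_one.1 (le_antisymm (by omega) (Finset.card_pos.2 ?_))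
      rw [Finset.nonempty_iff_ne_empty]
      rintro rfl
      simp only [Finset.notMem_empty, Set.iUnion_of_empty, Set.iUnion_empty, Set.sdiff_empty]
        at hlight
      exact hlight.not_ge hR.2
    rw [Finset.set_biUnion_singleton] at hlight
    simp only [Finset.mem_singleton, forall_eq] at hτℬ
    exact ⟨τ c, ℬ c, hτℬ.extend h𝒞 hlight⟩

end IsChildFamily

theorem exists_isRootedPathPartition (hN : 1 ≤ N) (hW : IsWeight d W) (hfin : (GN d N W).Finite)
    {R : Set (Fin d → ℝ)} (hR : R ∈ GN d N W) : ∃ T ℬ, IsRootedPathPartition d N W R T ℬ := by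
  refine (hfin.wellFoundedOn (r := (· ⊂ ·))).induction hR
    (P := fun R => ∃ T ℬ, IsRootedPathPartition d N W R T ℬ) fun R hR ih => ?_
  obtain ⟨𝒞, h𝒞⟩ := exists_isChildFamily hfin R
  choose! τ ℬ hτℬ using fun c hc => ih c (h𝒞.mem_GN c hc) (h𝒞.ssubset c hc)
  exact h𝒞.exists_isRootedPathPartition hN hW hR hτℬ

end Tree

/-- Proposition 4.3 / II.2, output of the algorithm: for a weight
`W` and `N ∈ ℕ`, the set `G_N = {Q dyadic : W(Q) ≥ 1/N}` is finite and
`G_N ∖ {[0,1)^d}` can be partitioned into at most `3N + 1` paths `B = [T_B, H_B]`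
of the dyadic tree with `W(H_B ∖ T_B) < 1/N` for each. -/
theorem statement16 (d N : ℕ) (hd : 1 ≤ d) (hN : 1 ≤ N)
    (W : Set (Fin d → ℝ) → ℝ≥0∞) (hW : IsWeight d W) :
    (GN d N W).Finite ∧
    ∃ (m : ℕ) (T H : Fin m → Set (Fin d → ℝ)),
      (∀ i, IsDyadicCube d (T i)) ∧
      (∀ i, IsDyadicCube d (H i)) ∧
      (∀ i, T i ⊆ H i) ∧
      (Set.univ : Set (Fin m)).PairwiseDisjoint
        (fun i => dyadicPath d (T i) (H i)) ∧
      (⋃ i, dyadicPath d (T i) (H i)) = GN d N W \ {unitCube d} ∧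
      (∀ i, W (H i \ T i) < ((N : ℝ≥0∞))⁻¹) ∧
      m ≤ 3 * N + 1 := by
  have hfin := GN_finite (N := N) hd hW
  obtain ⟨𝒞, h𝒞⟩ := exists_isChildFamily hfin (unitCube d)
  choose! τ ℬ hτℬ using fun c hc => exists_isRootedPathPartition hN hW hfin (h𝒞.mem_GN c hc)
  have hpart := h𝒞.isPathPartition hW hτℬ
  rw [GNBelow_unitCube] at hpart
  obtain ⟨T, H, hT, hH, hTH, hdisj, hunion, hlight⟩ := hpart.exists_fin
  refine ⟨hfin, _, T, H, hT, hH, hTH, hdisj, hunion, hlight, ?_⟩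
  have hcount := h𝒞.card_add_le hW isDyadicCube_unitCube hτℬ
  rw [hW.2.2, mul_one] at hcount
  have hcard : (𝒞.biUnion fun c => insert (τ c, c) (ℬ c)).card ≤ 2 * N := by
    exact_mod_cast le_self_add.trans (le_self_add.trans hcount)
  omega
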